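/- Having an atomic arity implies strong normalization for extended reduction: if AAA L T A, then T is strongly normalizing in L with respect to extended parallel reduction, i.e., every sequence of non-identity extended parallel reduction steps starting at T in L is finite. -/

import Mathlib

/-!
Tait-style reducibility. Arities are interpreted as predicates on closures `(L, T)`: the base
arity by strong normalization, an arrow `B → A` by sending, in every weakening of the closure,
arguments in the interpretation of `B` to applications in that of `A`. Every interpretation is a
reducibility candidate: it implies strong normalization, is stable under weakening, and is closed
under β-, δ- and ζ-expansion and cast formation inside an application spine. For strong
normalization itself these closure properties come from nested well-founded inductions; sorts
terminate because each sort step lowers the degree, and abbreviations need that strong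
normalization survives reducing the environment, since such a step can be replayed in the original
environment. An induction on the arity assignment then puts every term into the interpretation of
its arity, even after weakening and after refining abstraction entries into abbreviations of
reducible casts, which is the environment a β-step leaves behind.
-/

inductive Bk | abbr | abst
deriving DecidableEq

inductive Fk | appl | cast
deriving DecidableEq

inductive Tm
| sort : Nat → Tm
| lref : Nat → Tm
| bind : Bk → Tm → Tm → Tm
| flat : Fk → Tm → Tm → Tm
deriving DecidableEq

inductive Lift : Nat → Nat → Tm → Tm → Prop
| sort (l m k) : Lift l m (.sort k) (.sort k)
| lt {l m i} : i < l → Lift l m (.lref i) (.lref i)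
| ge {l m i} : l ≤ i → Lift l m (.lref i) (.lref (i + m))
| bind {l m b W₁ W₂ T₁ T₂} : Lift l m W₁ W₂ → Lift (l + 1) m T₁ T₂ →
    Lift l m (.bind b W₁ T₁) (.bind b W₂ T₂)
| flat {l m f V₁ V₂ T₁ T₂} : Lift l m V₁ V₂ → Lift l m T₁ T₂ →
    Lift l m (.flat f V₁ T₁) (.flat f V₂ T₂)

inductive Env
| null : Env
| pair : Env → Bk → Tm → Env
deriving DecidableEq

inductive Drop : Nat → Nat → Env → Env → Prop
| atom (l) : Drop l 0 .null .null
| pair {L₁ L₂ b W} : Drop 0 0 L₁ L₂ → Drop 0 0 (.pair L₁ b W) (.pair L₂ b W)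
| drop {m L₁ L₂ b W} : Drop 0 m L₁ L₂ → Drop 0 (m + 1) (.pair L₁ b W) L₂
| skip {l m L₁ L₂ b W₁ W₂} : Drop l m L₁ L₂ → Lift l m W₂ W₁ →
    Drop (l + 1) m (.pair L₁ b W₁) (.pair L₂ b W₂)

inductive Aa | star | impl : Aa → Aa → Aa
deriving DecidableEq

inductive Aaa : Env → Tm → Aa → Prop
| sort {L k} : Aaa L (.sort k) .star
| lref {L K b W B i} : Drop 0 i L (.pair K b W) → Aaa K W B → Aaa L (.lref i) B
| abbr {L V T B A} : Aaa L V B → Aaa (.pair L .abbr V) T A →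
    Aaa L (.bind .abbr V T) A
| abst {L W T B A} : Aaa L W B → Aaa (.pair L .abst W) T A →
    Aaa L (.bind .abst W T) (.impl B A)
| appl {L V T B A} : Aaa L V B → Aaa L T (.impl B A) → Aaa L (.flat .appl V T) A
| cast {L U T A} : Aaa L U A → Aaa L T A → Aaa L (.flat .cast U T) A

inductive Cpx (h g : Nat → Nat) : Env → Tm → Tm → Prop
| sort {L k} : Cpx h g L (.sort k) (.sort k)
| lref {L i} : Cpx h g L (.lref i) (.lref i)
| st {L k d} : g k = d + 1 → Cpx h g L (.sort k) (.sort (h k))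
| bind {L b W₁ W₂ T₁ T₂} : Cpx h g L W₁ W₂ → Cpx h g (.pair L b W₁) T₁ T₂ →
    Cpx h g L (.bind b W₁ T₁) (.bind b W₂ T₂)
| flat {L f V₁ V₂ T₁ T₂} : Cpx h g L V₁ V₂ → Cpx h g L T₁ T₂ →
    Cpx h g L (.flat f V₁ T₁) (.flat f V₂ T₂)
| delta {L K b W₁ W₂ V₂ i} : Drop 0 i L (.pair K b W₁) → Cpx h g K W₁ W₂ →
    Lift 0 (i + 1) W₂ V₂ → Cpx h g L (.lref i) V₂
| beta {L V₁ V₂ W₁ W₂ T₁ T₂} : Cpx h g L V₁ V₂ → Cpx h g L W₁ W₂ →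
    Cpx h g (.pair L .abst W₁) T₁ T₂ →
    Cpx h g L (.flat .appl V₁ (.bind .abst W₁ T₁))
      (.bind .abbr (.flat .cast W₂ V₂) T₂)
| zeta {L V U₁ U₂ T₂} : Cpx h g (.pair L .abbr V) U₁ U₂ → Lift 0 1 T₂ U₂ →
    Cpx h g L (.bind .abbr V U₁) T₂
| eps {L U T₁ T₂} : Cpx h g L T₁ T₂ → Cpx h g L (.flat .cast U T₁) T₂
| ee {L U₁ U₂ T} : Cpx h g L U₁ U₂ → Cpx h g L (.flat .cast U₁ T) U₂
| theta {L V₁ V₂ W₂ U₁ U₂ T₁ T₂} : Cpx h g L V₁ V₂ → Lift 0 1 V₂ W₂ →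
    Cpx h g L U₁ U₂ → Cpx h g (.pair L .abbr U₁) T₁ T₂ →
    Cpx h g L (.flat .appl V₁ (.bind .abbr U₁ T₁))
      (.bind .abbr U₂ (.flat .appl W₂ T₂))

inductive Lpx (h g : Nat → Nat) : Env → Env → Prop
| atom : Lpx h g .null .null
| pair {L₁ L₂ b W₁ W₂} : Lpx h g L₁ L₂ → Cpx h g L₁ W₁ W₂ →
    Lpx h g (.pair L₁ b W₁) (.pair L₂ b W₂)

inductive Csx (h g : Nat → Nat) (L : Env) : Tm → Prop
| intro {T₁} : (∀ T₂, Cpx h g L T₁ T₂ → T₁ ≠ T₂ → Csx h g L T₂) → Csx h g L T₁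

namespace Tm

def lift (l m : Nat) : Tm → Tm
  | .sort k => .sort k
  | .lref i => .lref (if i < l then i else i + m)
  | .bind b W T => .bind b (lift l m W) (lift (l + 1) m T)
  | .flat f V T => .flat f (lift l m V) (lift l m T)

theorem lift_spec (l m : Nat) (T : Tm) : Lift l m T (T.lift l m) := by
  induction T generalizing l with
  | sort k => exact .sort l m k
  | lref i =>
    by_cases hi : i < l
    · simpa [lift, hi] using Lift.lt hi
    · simpa [lift, hi] using Lift.ge (Nat.le_of_not_lt hi)
  | bind b W T ihW ihT => exact .bind (ihW l) (ihT (l + 1))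
  | flat f V T ihV ihT => exact .flat (ihV l) (ihT l)

theorem lift_injective (l m : Nat) : Function.Injective (lift l m) := by
  intro T₁ T₂ h
  induction T₁ generalizing T₂ l <;> cases T₂ <;> simp_all [lift]
  case lref.lref i j => split_ifs at h <;> omega
  case bind.bind ihW ihT _ _ _ => exact ⟨ihW _ h.2.1, ihT _ h.2.2⟩
  case flat.flat ihV ihT _ _ _ => exact ⟨ihV _ h.2.1, ihT _ h.2.2⟩

theorem lift_lift_of_le_of_le {l l' m m' : Nat} (h₁ : l ≤ l') (h₂ : l' ≤ l + m) (T : Tm) :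
    (T.lift l m).lift l' m' = T.lift l (m + m') := by
  induction T generalizing l l' with
  | sort k => rfl
  | lref i => simp only [lift]; split_ifs <;> simp <;> omega
  | bind b W T ihW ihT => simp only [lift, ihW h₁ h₂, ihT (Nat.succ_le_succ h₁) (by omega)]
  | flat f V T ihV ihT => simp only [lift, ihV h₁ h₂, ihT h₁ h₂]

theorem lift_lift_comm {l l' m m' : Nat} (h : l' ≤ l) (T : Tm) :
    (T.lift l m).lift l' m' = (T.lift l' m').lift (l + m') m := by
  induction T generalizing l l' with
  | sort k => rfl
  | lref i => simp only [lift]; split_ifs <;> simp <;> omega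
  | bind b W T ihW ihT => simp only [lift, ihW h, ihT (Nat.succ_le_succ h), Nat.succ_add]
  | flat f V T ihV ihT => simp only [lift, ihV h, ihT h]

theorem exists_of_lift_eq_lift {l₁ m₁ l₂ m₂ : Nat} (h : l₁ + m₁ ≤ l₂) {U S : Tm}
    (e : U.lift l₁ m₁ = S.lift l₂ m₂) :
    ∃ T : Tm, U = T.lift (l₂ - m₁) m₂ ∧ S = T.lift l₁ m₁ := by
  induction S generalizing U l₁ l₂ with
  | sort k =>
    cases U <;> simp only [lift, reduceCtorEq, Tm.sort.injEq] at e
    exact ⟨.sort k, by simp [lift, e]⟩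
  | lref i =>
    cases U <;> simp only [lift, reduceCtorEq, Tm.lref.injEq] at e
    case lref j =>
      refine ⟨.lref (if i < l₂ then j else i - m₁), ?_, ?_⟩ <;> simp only [lift] <;>
        (split_ifs at e ⊢ <;> simp_all <;> omega)
  | bind b W T ihW ihT =>
    cases U <;> simp only [lift, reduceCtorEq, Tm.bind.injEq] at e
    obtain ⟨rfl, eW, eT⟩ := e
    obtain ⟨W', rfl, rfl⟩ := ihW h eW
    obtain ⟨T', rfl, rfl⟩ := ihT (l₁ := l₁ + 1) (l₂ := l₂ + 1) (by omega) eT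
    exact ⟨.bind _ W' T', by simp [lift, Nat.sub_add_comm (show m₁ ≤ l₂ by omega)], rfl⟩
  | flat f V T ihV ihT =>
    cases U <;> simp only [lift, reduceCtorEq, Tm.flat.injEq] at e
    obtain ⟨rfl, eV, eT⟩ := e
    obtain ⟨V', rfl, rfl⟩ := ihV h eV
    obtain ⟨T', rfl, rfl⟩ := ihT h eT
    exact ⟨.flat _ V' T', rfl, rfl⟩

/-- `apps [V₁, …, Vₙ] T` is `T` applied to `Vₙ`, …, `V₁`: in `.flat .appl V T` the argument
comes first, so `V₁` is the outermost argument. -/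
def apps : List Tm → Tm → Tm
  | [], T => T
  | V :: Vs, T => .flat .appl V (apps Vs T)

theorem lift_apps (l m : Nat) (Vs : List Tm) (T : Tm) :
    (apps Vs T).lift l m = apps (Vs.map (lift l m)) (T.lift l m) := by
  induction Vs with
  | nil => rfl
  | cons W Ws ih => simp [apps, lift, ih]

theorem apps_inj {Vs Vs' : List Tm} {S S' : Tm} (hlen : Vs.length = Vs'.length)
    (e : apps Vs S = apps Vs' S') : Vs = Vs' ∧ S = S' := by
  induction Vs generalizing Vs' with
  | nil => cases Vs' with
    | nil => exact ⟨rfl, e⟩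
    | cons _ _ => simp at hlen
  | cons V Vs ih =>
    cases Vs' with
    | nil => simp at hlen
    | cons V' Vs' =>
      simp only [apps, Tm.flat.injEq] at e
      obtain ⟨_, rfl, e⟩ := e
      obtain ⟨rfl, rfl⟩ := ih (by simpa using hlen) e
      exact ⟨rfl, rfl⟩

end Tm

open Tm

theorem Lift.eq_lift {l m : Nat} {T U : Tm} (h : Lift l m T U) : U = T.lift l m := by
  induction h with
  | sort => rfl
  | lt hi => simp [lift, hi]
  | ge hi => simp [lift, Nat.not_lt.mpr hi]
  | bind _ _ ihW ihT => simp [lift, ihW, ihT]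
  | flat _ _ ihV ihT => simp [lift, ihV, ihT]

theorem Lift.iff_eq_lift {l m : Nat} {T U : Tm} : Lift l m T U ↔ U = T.lift l m :=
  ⟨Lift.eq_lift, fun h => h ▸ lift_spec l m T⟩

namespace Drop

theorem eq_of_zero {L₁ L₂ : Env} (h : Drop 0 0 L₁ L₂) : L₁ = L₂ := by
  induction L₁ generalizing L₂ with
  | null => cases h; rfl
  | pair L b W ih => cases h with | pair h => rw [ih h]

theorem refl (L : Env) : Drop 0 0 L L := by
  induction L with
  | null => exact .atom 0
  | pair L b W ih => exact .pair ih

theorem one (L : Env) (b : Bk) (W : Tm) : Drop 0 1 (.pair L b W) L :=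
  .drop (refl L)

theorem succ {L K : Env} {b : Bk} {W : Tm} {i : Nat} (h : Drop 0 i L (.pair K b W)) :
    Drop 0 (i + 1) L K := by
  induction L generalizing i with
  | null => cases h
  | pair L b' W' ih =>
    cases h with
    | pair h => cases eq_of_zero h; exact .drop (refl _)
    | drop h => exact .drop (ih h)

theorem unique {i : Nat} {L X Y : Env} (hX : Drop 0 i L X) (hY : Drop 0 i L Y) : X = Y := by
  induction L generalizing i X Y with
  | null => cases hX; cases hY; rfl
  | pair L b W ih =>
    cases hX with
    | pair hX => cases hY with | pair hY => rw [← eq_of_zero hX, ← eq_of_zero hY]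
    | drop hX => cases hY with | drop hY => exact ih hX hY

variable {d l : Nat} {L₀ L : Env}

theorem shift_of_le (h : Drop d l L₀ L) {i : Nat} {K : Env} (hi : Drop 0 i L K) (hd : d ≤ i) :
    Drop 0 (i + l) L₀ K := by
  induction h generalizing i with
  | atom => cases hi; exact .atom 0
  | pair h => cases eq_of_zero h; simpa using hi
  | drop _ ih => exact .drop (ih hi hd)
  | skip _ _ ih =>
    cases hi with
    | drop hi => simpa [Nat.succ_add] using Drop.drop (ih hi (by omega))
    | pair => omega

theorem unshift_of_le (h : Drop d l L₀ L) {i : Nat} {K : Env} (hd : d ≤ i)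
    (hi : Drop 0 (i + l) L₀ K) : Drop 0 i L K := by
  induction h generalizing i with
  | atom => cases hi; exact .atom 0
  | pair h => cases eq_of_zero h; simpa using hi
  | @drop m _ _ _ _ _ ih =>
    rw [← Nat.add_assoc] at hi
    cases hi with | drop hi => exact ih hd hi
  | @skip _ m _ _ _ _ _ _ _ ih =>
    obtain ⟨j, rfl⟩ : ∃ j, i = j + 1 := ⟨i - 1, by omega⟩
    rw [Nat.add_right_comm] at hi
    cases hi with | drop hi => exact .drop (ih (by omega) hi)

theorem lift_entry_of_lt (h : Drop d l L₀ L) {i : Nat} {K : Env} {b : Bk} {W : Tm}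
    (hi : Drop 0 i L (.pair K b W)) (hd : i < d) :
    ∃ K₀, Drop 0 i L₀ (.pair K₀ b (W.lift (d - 1 - i) l)) ∧ Drop (d - 1 - i) l K₀ K := by
  induction h generalizing i with
  | atom => cases hi
  | pair | drop => omega
  | @skip e _ L₁ _ _ _ _ h hl ih =>
    cases hi with
    | pair h₀ =>
      cases eq_of_zero h₀
      simp only [Nat.add_sub_cancel, Nat.sub_zero, ← hl.eq_lift]
      exact ⟨L₁, .pair (refl L₁), h⟩
    | @drop m _ _ _ _ hi =>
      obtain ⟨K₀, h₁, h₂⟩ := ih hi (by omega)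
      rw [show e - 1 - m = e + 1 - 1 - (m + 1) by omega] at h₁ h₂
      exact ⟨K₀, .drop h₁, h₂⟩

theorem exists_entry_of_lt (h : Drop d l L₀ L) {i : Nat} {K₀ : Env} {b : Bk} {W₀ : Tm}
    (hi : Drop 0 i L₀ (.pair K₀ b W₀)) (hd : i < d) :
    ∃ K W, Drop 0 i L (.pair K b W) ∧ Drop (d - 1 - i) l K₀ K ∧
      W₀ = W.lift (d - 1 - i) l := by
  induction h generalizing i with
  | atom => cases hi
  | pair | drop => omega
  | @skip e _ _ L₂ _ _ W₂ h hl ih =>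
    cases hi with
    | pair h₀ =>
      cases eq_of_zero h₀
      exact ⟨L₂, W₂, .pair (refl L₂), by simpa using h, by simpa using hl.eq_lift⟩
    | @drop m _ _ _ _ hi =>
      obtain ⟨K, W, h₁, h₂, h₃⟩ := ih hi (by omega)
      rw [show e - 1 - m = e + 1 - 1 - (m + 1) by omega] at h₂ h₃
      exact ⟨K, W, .drop h₁, h₂, h₃⟩

end Drop

variable {h g : Nat → Nat}

namespace Cpx

theorem refl (L : Env) (T : Tm) : Cpx h g L T T := by
  induction T generalizing L with
  | sort k => exact .sort
  | lref i => exact .lref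
  | bind b W T ihW ihT => exact .bind (ihW L) (ihT _)
  | flat f V T ihV ihT => exact .flat (ihV L) (ihT L)

theorem inv_sort {L : Env} {k : Nat} {X : Tm} (hc : Cpx h g L (.sort k) X) :
    X = .sort k ∨ X = .sort (h k) ∧ ∃ d, g k = d + 1 := by
  cases hc with
  | sort => exact .inl rfl
  | st e => exact .inr ⟨rfl, _, e⟩

theorem inv_lref {L : Env} {i : Nat} {X : Tm} (hc : Cpx h g L (.lref i) X) :
    X = .lref i ∨ ∃ K b W₁ W₂, Drop 0 i L (.pair K b W₁) ∧ Cpx h g K W₁ W₂ ∧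
      X = W₂.lift 0 (i + 1) := by
  cases hc with
  | lref => exact .inl rfl
  | delta hd hW hl => exact .inr ⟨_, _, _, _, hd, hW, hl.eq_lift⟩

theorem inv_abst {L : Env} {W T X : Tm} (hc : Cpx h g L (.bind .abst W T) X) :
    ∃ W₂ T₂, X = .bind .abst W₂ T₂ ∧ Cpx h g L W W₂ ∧ Cpx h g (.pair L .abst W) T T₂ := by
  cases hc with
  | bind hW hT => exact ⟨_, _, rfl, hW, hT⟩

theorem inv_abbr {L : Env} {V T X : Tm} (hc : Cpx h g L (.bind .abbr V T) X) :
    (∃ V₂ T₂, X = .bind .abbr V₂ T₂ ∧ Cpx h g L V V₂ ∧ Cpx h g (.pair L .abbr V) T T₂) ∨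
      Cpx h g (.pair L .abbr V) T (X.lift 0 1) := by
  cases hc with
  | bind hV hT => exact .inl ⟨_, _, rfl, hV, hT⟩
  | zeta hT hl => exact .inr (hl.eq_lift ▸ hT)

theorem inv_appl {L : Env} {V T X : Tm} (hc : Cpx h g L (.flat .appl V T) X) :
    (∃ V₂ T₂, X = .flat .appl V₂ T₂ ∧ Cpx h g L V V₂ ∧ Cpx h g L T T₂) ∨
    (∃ W S V₂ W₂ S₂, T = .bind .abst W S ∧ Cpx h g L V V₂ ∧ Cpx h g L W W₂ ∧
      Cpx h g (.pair L .abst W) S S₂ ∧ X = .bind .abbr (.flat .cast W₂ V₂) S₂) ∨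
    (∃ U S V₂ U₂ S₂, T = .bind .abbr U S ∧ Cpx h g L V V₂ ∧ Cpx h g L U U₂ ∧
      Cpx h g (.pair L .abbr U) S S₂ ∧ X = .bind .abbr U₂ (.flat .appl (V₂.lift 0 1) S₂)) := by
  cases hc with
  | flat hV hT => exact .inl ⟨_, _, rfl, hV, hT⟩
  | beta hV hW hS => exact .inr (.inl ⟨_, _, _, _, _, rfl, hV, hW, hS, rfl⟩)
  | theta hV hl hU hS => exact .inr (.inr ⟨_, _, _, _, _, rfl, hV, hU, hS, by rw [← hl.eq_lift]⟩)

theorem inv_cast {L : Env} {U T X : Tm} (hc : Cpx h g L (.flat .cast U T) X) :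
    (∃ U₂ T₂, X = .flat .cast U₂ T₂ ∧ Cpx h g L U U₂ ∧ Cpx h g L T T₂) ∨
      Cpx h g L T X ∨ Cpx h g L U X := by
  cases hc with
  | flat hU hT => exact .inl ⟨_, _, rfl, hU, hT⟩
  | eps hT => exact .inr (.inl hT)
  | ee hU => exact .inr (.inr hU)

theorem lift_delta {L₀ L K : Env} {b : Bk} {W₁ W₂ : Tm} {i d l : Nat}
    (hd : Drop d l L₀ L) (hi : Drop 0 i L (.pair K b W₁)) (hW : Cpx h g K W₁ W₂)
    (ihW : ∀ {K₀ d' l'}, Drop d' l' K₀ K → Cpx h g K₀ (W₁.lift d' l') (W₂.lift d' l')) :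
    Cpx h g L₀ ((Tm.lref i).lift d l) ((W₂.lift 0 (i + 1)).lift d l) := by
  by_cases hid : i < d
  · obtain ⟨K₀, hi₀, hK₀⟩ := hd.lift_entry_of_lt hi hid
    have e : (W₂.lift 0 (i + 1)).lift d l = (W₂.lift (d - 1 - i) l).lift 0 (i + 1) := by
      rw [lift_lift_comm (Nat.zero_le _) W₂, show d - 1 - i + (i + 1) = d by omega]
    simp only [lift, if_pos hid, e]
    exact .delta hi₀ (ihW hK₀) (lift_spec _ _ _)
  · have e : (W₂.lift 0 (i + 1)).lift d l = W₂.lift 0 (i + l + 1) := by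
      rw [lift_lift_of_le_of_le (Nat.zero_le _) (by omega), Nat.add_right_comm]
    simp only [lift, if_neg hid, e]
    exact .delta (hd.shift_of_le hi (by omega)) hW (lift_spec _ _ _)

theorem lift {L T₁ T₂} (hc : Cpx h g L T₁ T₂) {L₀ : Env} {d l : Nat} (hd : Drop d l L₀ L) :
    Cpx h g L₀ (T₁.lift d l) (T₂.lift d l) := by
  induction hc generalizing L₀ d l with
  | sort => exact .sort
  | lref => exact .lref
  | st e => exact .st e
  | bind _ _ ihW ihT => exact .bind (ihW hd) (ihT (.skip hd (lift_spec d l _)))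
  | flat _ _ ihV ihT => exact .flat (ihV hd) (ihT hd)
  | delta hi hW hl ihW => rw [hl.eq_lift]; exact lift_delta hd hi hW ihW
  | beta _ _ _ ihV ihW ihT => exact .beta (ihV hd) (ihW hd) (ihT (.skip hd (lift_spec d l _)))
  | zeta _ hl ih =>
    refine .zeta (ih (.skip hd (lift_spec d l _))) ?_
    rw [Lift.iff_eq_lift, hl.eq_lift, ← lift_lift_comm (Nat.zero_le d)]
  | eps _ ih => exact .eps (ih hd)
  | ee _ ih => exact .ee (ih hd)
  | theta _ hl _ _ ihV ihU ihT =>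
    refine .theta (ihV hd) ?_ (ihU hd) (ihT (.skip hd (lift_spec d l _)))
    rw [Lift.iff_eq_lift, hl.eq_lift, ← lift_lift_comm (Nat.zero_le d)]

theorem inv_lift_delta {L₀ L K : Env} {b : Bk} {W₁ W₂ V₂ T₁ : Tm} {i d l : Nat}
    (hd : Drop d l L₀ L) (hi : Drop 0 i L₀ (.pair K b W₁)) (hW : Cpx h g K W₁ W₂)
    (hV₂ : Lift 0 (i + 1) W₂ V₂) (hl : Lift d l T₁ (.lref i))
    (ihW : ∀ {K' d' l' W'}, Drop d' l' K K' → Lift d' l' W' W₁ →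
      ∃ W₂', Lift d' l' W₂' W₂ ∧ Cpx h g K' W' W₂') :
    ∃ T₂, Lift d l T₂ V₂ ∧ Cpx h g L T₁ T₂ := by
  rw [hV₂.eq_lift]
  cases hl with
  | lt hid =>
    obtain ⟨K', W', hi', hK, rfl⟩ := hd.exists_entry_of_lt hi hid
    obtain ⟨W₂', hW₂', hc⟩ := ihW hK (lift_spec _ _ _)
    refine ⟨W₂'.lift 0 (i + 1), ?_, .delta hi' hc (lift_spec _ _ _)⟩
    rw [Lift.iff_eq_lift, hW₂'.eq_lift, lift_lift_comm (Nat.zero_le _) W₂',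
      show d - 1 - i + (i + 1) = d by omega]
  | @ge _ _ j hdj =>
    refine ⟨W₂.lift 0 (j + 1), ?_, .delta (hd.unshift_of_le hdj hi) hW (lift_spec _ _ _)⟩
    rw [Lift.iff_eq_lift, lift_lift_of_le_of_le (Nat.zero_le _) (by omega), Nat.add_right_comm]

theorem inv_lift {L₀ U₁ U₂} (hc : Cpx h g L₀ U₁ U₂) {L : Env} {d l : Nat} {T₁ : Tm}
    (hd : Drop d l L₀ L) (hl : Lift d l T₁ U₁) : ∃ T₂, Lift d l T₂ U₂ ∧ Cpx h g L T₁ T₂ := by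
  induction hc generalizing L d l T₁ with
  | sort => cases hl; exact ⟨_, .sort .., .sort⟩
  | lref => exact ⟨_, hl, refl _ _⟩
  | st e => cases hl; exact ⟨_, .sort .., .st e⟩
  | bind _ _ ihW ihT =>
    cases hl with | bind hW hT =>
    obtain ⟨W₂, hW₂, cW⟩ := ihW hd hW
    obtain ⟨T₂, hT₂, cT⟩ := ihT (.skip hd hW) hT
    exact ⟨_, .bind hW₂ hT₂, .bind cW cT⟩
  | flat _ _ ihV ihT =>
    cases hl with | flat hV hT =>
    obtain ⟨V₂, hV₂, cV⟩ := ihV hd hV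
    obtain ⟨T₂, hT₂, cT⟩ := ihT hd hT
    exact ⟨_, .flat hV₂ hT₂, .flat cV cT⟩
  | delta hi hW hV₂ ihW => exact inv_lift_delta hd hi hW hV₂ hl ihW
  | beta _ _ _ ihV ihW ihT =>
    cases hl with | flat hV hT =>
    cases hT with | bind hW hT =>
    obtain ⟨V₂, hV₂, cV⟩ := ihV hd hV
    obtain ⟨W₂, hW₂, cW⟩ := ihW hd hW
    obtain ⟨T₂, hT₂, cT⟩ := ihT (.skip hd hW) hT
    exact ⟨_, .bind (.flat hW₂ hV₂) hT₂, .beta cV cW cT⟩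
  | zeta _ hU₂ ihU =>
    cases hl with | bind hV hT =>
    obtain ⟨U₂, hU₂', cU⟩ := ihU (.skip hd hV) hT
    obtain ⟨T₂, e, rfl⟩ := exists_of_lift_eq_lift (l₁ := 0) (m₁ := 1) (by omega)
      (hU₂.eq_lift.symm.trans hU₂'.eq_lift)
    exact ⟨T₂, Lift.iff_eq_lift.2 (by simpa using e), .zeta cU (lift_spec _ _ _)⟩
  | eps _ ih => cases hl with | flat _ hT => exact (ih hd hT).imp fun _ h => ⟨h.1, .eps h.2⟩
  | ee _ ih => cases hl with | flat hU _ => exact (ih hd hU).imp fun _ h => ⟨h.1, .ee h.2⟩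
  | theta _ hW₂ _ _ ihV ihU ihT =>
    cases hl with | flat hV hT =>
    cases hT with | bind hU hT =>
    obtain ⟨V₂, hV₂, cV⟩ := ihV hd hV
    obtain ⟨U₂, hU₂, cU⟩ := ihU hd hU
    obtain ⟨T₂, hT₂, cT⟩ := ihT (.skip hd hU) hT
    refine ⟨_, .bind hU₂ (.flat ?_ hT₂), .theta cV (lift_spec 0 1 V₂) cU cT⟩
    rw [Lift.iff_eq_lift, hW₂.eq_lift, hV₂.eq_lift, lift_lift_comm (Nat.zero_le d)]

end Cpx

def Red (h g : Nat → Nat) (L : Env) (T₁ T₂ : Tm) : Prop := Cpx h g L T₁ T₂ ∧ T₁ ≠ T₂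

abbrev Reds (h g : Nat → Nat) (L : Env) : Tm → Tm → Prop := Relation.ReflTransGen (Red h g L)

theorem csx_iff_acc {L : Env} {T : Tm} : Csx h g L T ↔ Acc (flip (Red h g L)) T := by
  constructor
  · intro hc
    induction hc with
    | intro _ ih => exact .intro _ fun T₂ hr => ih T₂ hr.1 hr.2
  · intro hc
    induction hc with
    | intro _ _ ih => exact .intro fun T₂ hs hne => ih T₂ ⟨hs, hne⟩

namespace Csx

theorem of_cpx {L : Env} {T₁ T₂ : Tm} (hc : Csx h g L T₁) (hs : Cpx h g L T₁ T₂) :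
    Csx h g L T₂ := by
  by_cases e : T₁ = T₂
  · exact e ▸ hc
  · cases hc with | intro f => exact f T₂ hs e

theorem lift {L T} (hc : Csx h g L T) {L₀ : Env} {d l : Nat} (hd : Drop d l L₀ L) :
    Csx h g L₀ (T.lift d l) := by
  induction hc with
  | intro _ ih =>
    refine .intro fun U₂ hs hne => ?_
    obtain ⟨T₂, hT₂, hc⟩ := hs.inv_lift hd (lift_spec _ _ _)
    rw [hT₂.eq_lift] at hne ⊢
    exact ih T₂ hc (fun e => hne (e ▸ rfl))

theorem of_lift {L₀ L : Env} {T : Tm} {d l : Nat} (hc : Csx h g L₀ (T.lift d l))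
    (hd : Drop d l L₀ L) : Csx h g L T := by
  generalize e : T.lift d l = U at hc
  induction hc generalizing T with
  | intro _ ih =>
    subst e
    exact .intro fun T₂ hs hne => ih _ (hs.lift hd) (fun e => hne (lift_injective _ _ e)) rfl

theorem of_flat_right {L : Env} {f : Fk} {V T : Tm} (hc : Csx h g L (.flat f V T)) :
    Csx h g L T := by
  generalize e : Tm.flat f V T = X at hc
  induction hc generalizing T with
  | intro _ ih =>
    subst e
    exact .intro fun T₂ hs hne => ih _ (.flat (Cpx.refl L V) hs) (by simpa using hne) rfl

end Csx

namespace Reds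

variable {L : Env}

theorem of_cpx {T₁ T₂ : Tm} (hs : Cpx h g L T₁ T₂) : Reds h g L T₁ T₂ := by
  by_cases e : T₁ = T₂
  · exact e ▸ .refl
  · exact .single ⟨hs, e⟩

theorem flat_right {f : Fk} {V T₁ T₂ : Tm} (hs : Reds h g L T₁ T₂) :
    Reds h g L (.flat f V T₁) (.flat f V T₂) :=
  Relation.ReflTransGen.lift _ (fun _ _ r => ⟨.flat (Cpx.refl L V) r.1, by simpa using r.2⟩) _ _ hs

theorem flat_left {f : Fk} {V₁ V₂ T : Tm} (hs : Reds h g L V₁ V₂) :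
    Reds h g L (.flat f V₁ T) (.flat f V₂ T) :=
  Relation.ReflTransGen.lift (Tm.flat f · T)
    (fun _ _ r => ⟨.flat r.1 (Cpx.refl L T), by simpa using r.2⟩) _ _ hs

theorem bind_right {b : Bk} {W T₁ T₂ : Tm} (hs : Reds h g (.pair L b W) T₁ T₂) :
    Reds h g L (.bind b W T₁) (.bind b W T₂) :=
  Relation.ReflTransGen.lift _ (fun _ _ r => ⟨.bind (Cpx.refl L W) r.1, by simpa using r.2⟩) _ _ hs

theorem bind_left {b : Bk} {W₁ W₂ T : Tm} (hs : Reds h g L W₁ W₂) :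
    Reds h g L (.bind b W₁ T) (.bind b W₂ T) :=
  Relation.ReflTransGen.lift (Tm.bind b · T)
    (fun _ _ r => ⟨.bind r.1 (Cpx.refl _ T), by simpa using r.2⟩) _ _ hs

theorem lift {T₁ T₂ : Tm} (hs : Reds h g L T₁ T₂) {L₀ : Env} {d l : Nat} (hd : Drop d l L₀ L) :
    Reds h g L₀ (T₁.lift d l) (T₂.lift d l) :=
  Relation.ReflTransGen.lift _
    (fun _ _ r => ⟨r.1.lift hd, fun e => r.2 (lift_injective _ _ e)⟩) _ _ hs

end Reds

/-- `L₁` is `L₂` with some abstraction entries `W` replaced by abbreviations `.flat .cast W V`,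
as β leaves them, each subject to the side condition `P`. -/
inductive Refines (P : Env → Env → Tm → Tm → Prop) : Env → Env → Prop
  | null : Refines P .null .null
  | pair {L₁ L₂ b W} : Refines P L₁ L₂ → Refines P (.pair L₁ b W) (.pair L₂ b W)
  | beta {L₁ L₂ W V} : Refines P L₁ L₂ → P L₁ L₂ W V →
      Refines P (.pair L₁ .abbr (.flat .cast W V)) (.pair L₂ .abst W)

namespace Refines

variable {P : Env → Env → Tm → Tm → Prop}

theorem refl (L : Env) : Refines P L L := by
  induction L with
  | null => exact .null
  | pair L b W ih => exact .pair ih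

theorem entry {L₁ L₂ : Env} (hr : Refines P L₁ L₂) {i : Nat} {K₂ : Env} {b : Bk} {W : Tm}
    (hi : Drop 0 i L₂ (.pair K₂ b W)) :
    (∃ K₁, Drop 0 i L₁ (.pair K₁ b W) ∧ Refines P K₁ K₂) ∨
    (b = .abst ∧ ∃ K₁ V, Drop 0 i L₁ (.pair K₁ .abbr (.flat .cast W V)) ∧
      Refines P K₁ K₂ ∧ P K₁ K₂ W V) := by
  induction hr generalizing i with
  | null => cases hi
  | @pair L₁ _ _ _ hr ih =>
    cases hi with
    | pair h₀ => cases Drop.eq_of_zero h₀; exact .inl ⟨L₁, .pair (.refl L₁), hr⟩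
    | drop hi =>
      rcases ih hi with ⟨K₁, h₁, h₂⟩ | ⟨rfl, K₁, V, h₁, h₂, h₃⟩
      · exact .inl ⟨K₁, .drop h₁, h₂⟩
      · exact .inr ⟨rfl, K₁, V, .drop h₁, h₂, h₃⟩
  | @beta L₁ _ _ V hr hP ih =>
    cases hi with
    | pair h₀ => cases Drop.eq_of_zero h₀; exact .inr ⟨rfl, L₁, V, .pair (.refl L₁), hr, hP⟩
    | drop hi =>
      rcases ih hi with ⟨K₁, h₁, h₂⟩ | ⟨rfl, K₁, V, h₁, h₂, h₃⟩
      · exact .inl ⟨K₁, .drop h₁, h₂⟩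
      · exact .inr ⟨rfl, K₁, V, .drop h₁, h₂, h₃⟩

end Refines

namespace Cpx

/-- A δ-step on a refined entry `.flat .cast W V` is followed by an `ee`-step to reach `W`. -/
theorem of_refines {P : Env → Env → Tm → Tm → Prop} {L₂ T₁ T₂} (hc : Cpx h g L₂ T₁ T₂)
    {L₁ : Env} (hr : Refines P L₁ L₂) : Cpx h g L₁ T₁ T₂ := by
  induction hc generalizing L₁ with
  | sort => exact .sort
  | lref => exact .lref
  | st e => exact .st e
  | bind _ _ ihW ihT => exact .bind (ihW hr) (ihT (.pair hr))
  | flat _ _ ihV ihT => exact .flat (ihV hr) (ihT hr)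
  | delta hi _ hl ih =>
    rcases hr.entry hi with ⟨K₁, h₁, h₂⟩ | ⟨rfl, K₁, V, h₁, h₂, -⟩
    · exact .delta h₁ (ih h₂) hl
    · exact .delta h₁ (.ee (ih h₂)) hl
  | beta _ _ _ ihV ihW ihT => exact .beta (ihV hr) (ihW hr) (ihT (.pair hr))
  | zeta _ hl ihU => exact .zeta (ihU (.pair hr)) hl
  | eps _ ih => exact .eps (ih hr)
  | ee _ ih => exact .ee (ih hr)
  | theta _ hl _ _ ihV ihU ihT => exact .theta (ihV hr) hl (ihU hr) (ihT (.pair hr))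

theorem abbr_cast_of_abst {L : Env} {W V T₁ T₂ : Tm} (hc : Cpx h g (.pair L .abst W) T₁ T₂) :
    Cpx h g (.pair L .abbr (.flat .cast W V)) T₁ T₂ :=
  hc.of_refines (P := fun _ _ _ _ => True) (.beta (.refl L) trivial)

end Cpx

namespace Lpx

theorem refl (L : Env) : Lpx h g L L := by
  induction L with
  | null => exact .atom
  | pair L b W ih => exact .pair ih (Cpx.refl L W)

theorem entry {L₁ L₂ : Env} (hl : Lpx h g L₁ L₂) {i : Nat} {K₂ : Env} {b : Bk} {W₂ : Tm}
    (hi : Drop 0 i L₂ (.pair K₂ b W₂)) :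
    ∃ K₁ W₁, Drop 0 i L₁ (.pair K₁ b W₁) ∧ Lpx h g K₁ K₂ ∧ Cpx h g K₁ W₁ W₂ := by
  induction hl generalizing i with
  | atom => cases hi
  | @pair L₁ _ _ W₁ _ hl hc ih =>
    cases hi with
    | pair h₀ => cases Drop.eq_of_zero h₀; exact ⟨L₁, W₁, .pair (.refl L₁), hl, hc⟩
    | drop hi =>
      obtain ⟨K₁, W₁, h₁, h₂, h₃⟩ := ih hi
      exact ⟨K₁, W₁, .drop h₁, h₂, h₃⟩

end Lpx

/-- Fire the rule on the unreduced parts first, then reduce the parts one after another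
(for δ, the copied entry). -/
theorem Reds.of_lpx {L₂ T₁ T₂} (hc : Cpx h g L₂ T₁ T₂) {L₁ : Env} (hl : Lpx h g L₁ L₂) :
    Reds h g L₁ T₁ T₂ := by
  induction hc generalizing L₁ with
  | sort | lref => exact .refl
  | st e => exact of_cpx (.st e)
  | bind _ _ ihW ihT => exact (bind_right (ihT (.pair hl (.refl _ _)))).trans (bind_left (ihW hl))
  | flat _ _ ihV ihT => exact (flat_right (ihT hl)).trans (flat_left (ihV hl))
  | @delta _ _ _ W₁ _ _ i hi _ hlift ih =>
    obtain ⟨K₁, W₀, h₁, h₂, h₃⟩ := hl.entry hi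
    rw [hlift.eq_lift]
    exact (of_cpx (.delta h₁ h₃ (lift_spec 0 (i + 1) W₁))).trans ((ih h₂).lift h₁.succ)
  | beta _ _ _ ihV ihW ihT =>
    refine (of_cpx (.beta (.refl _ _) (.refl _ _) (.refl _ _))).trans ?_
    refine (bind_right ?_).trans (bind_left ((flat_left (ihW hl)).trans (flat_right (ihV hl))))
    exact Relation.ReflTransGen.mono (fun _ _ r => ⟨Cpx.abbr_cast_of_abst r.1, r.2⟩) _ _
      (ihT (.pair hl (.refl _ _)))
  | zeta _ hlift ihU =>
    exact (bind_right (ihU (.pair hl (.refl _ _)))).trans (of_cpx (.zeta (.refl _ _) hlift))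
  | eps _ ih => exact (of_cpx (.eps (.refl _ _))).trans (ih hl)
  | ee _ ih => exact (of_cpx (.ee (.refl _ _))).trans (ih hl)
  | @theta _ V₁ _ _ _ _ _ _ _ hlift _ _ ihV ihU ihT =>
    refine (of_cpx (.theta (.refl _ _) (lift_spec 0 1 V₁) (.refl _ _) (.refl _ _))).trans ?_
    rw [hlift.eq_lift]
    refine (bind_right ((flat_right (ihT (.pair hl (.refl _ _)))).trans ?_)).trans
      (bind_left (ihU hl))
    exact flat_left ((ihV hl).lift (.one _ _ _))

theorem Csx.of_lpx {L₁ : Env} {T : Tm} (hc : Csx h g L₁ T) {L₂ : Env} (hl : Lpx h g L₁ L₂) :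
    Csx h g L₂ T := by
  have hacc := acc_transGen_iff.2 (csx_iff_acc.1 hc)
  clear hc
  induction hacc with
  | intro T _ ih =>
    refine .intro fun T₂ hs hne => ih T₂ ?_
    rcases Relation.reflTransGen_iff_eq_or_transGen.1 (Reds.of_lpx hs hl) with e | ht
    · exact absurd e.symm hne
    · exact Relation.transGen_swap.2 ht

namespace Cpx

theorem apps {L : Env} {Vs Vs₂ : List Tm} {S S₂ : Tm}
    (hf : List.Forall₂ (Cpx h g L) Vs Vs₂) (hS : Cpx h g L S S₂) :
    Cpx h g L (apps Vs S) (apps Vs₂ S₂) := by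
  induction hf with
  | nil => exact hS
  | cons hV _ ih => exact .flat hV ih

theorem inv_apps {L : Env} {Vs : List Tm} {S X : Tm} (hS : ∀ b W U, S ≠ .bind b W U)
    (hc : Cpx h g L (Tm.apps Vs S) X) :
    ∃ Vs₂ S₂, X = Tm.apps Vs₂ S₂ ∧ List.Forall₂ (Cpx h g L) Vs Vs₂ ∧ Cpx h g L S S₂ := by
  induction Vs generalizing X with
  | nil => exact ⟨[], X, rfl, .nil, hc⟩
  | cons V Vs ih =>
    rcases hc.inv_appl with ⟨V₂, T₂, rfl, hV, hT⟩ | ⟨_, _, _, _, _, e, -⟩ | ⟨_, _, _, _, _, e, -⟩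
    · obtain ⟨Vs₂, S₂, rfl, hf, hS₂⟩ := ih hT
      exact ⟨V₂ :: Vs₂, S₂, rfl, .cons hV hf, hS₂⟩
    all_goals cases Vs with
      | nil => exact absurd e (hS _ _ _)
      | cons => simp [Tm.apps] at e

/-- Apart from ζ, every step is a congruence, possibly after θ has moved outer arguments under
the binder, which shortens the spine. -/
theorem inv_apps_abbr {L : Env} {Vs : List Tm} {V T X : Tm}
    (hc : Cpx h g L (Tm.apps Vs (.bind .abbr V T)) X) :
    Cpx h g (.pair L .abbr V) (Tm.apps (Vs.map (Tm.lift 0 1)) T) (X.lift 0 1) ∨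
    ∃ Vs₂ V₂ T₂, X = Tm.apps Vs₂ (.bind .abbr V₂ T₂) ∧ Vs₂.length ≤ Vs.length ∧
      Cpx h g L V V₂ ∧
      Cpx h g (.pair L .abbr V) (Tm.apps (Vs.map (Tm.lift 0 1)) T)
        (Tm.apps (Vs₂.map (Tm.lift 0 1)) T₂) := by
  induction Vs generalizing X with
  | nil =>
    rcases hc.inv_abbr with ⟨V₂, T₂, rfl, hV, hT⟩ | hζ
    · exact .inr ⟨[], V₂, T₂, rfl, le_rfl, hV, hT⟩
    · exact .inl hζ
  | cons V₀ Vs ih =>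
    have hV₀ {V₂ : Tm} (hc₀ : Cpx h g L V₀ V₂) := hc₀.lift (.one L .abbr V)
    rcases hc.inv_appl with ⟨V₂, T₂, rfl, hV, hT⟩ | ⟨_, _, _, _, _, e, -⟩ |
      ⟨_, _, V₂, U₂, S₂, e, hV, hU, hS, rfl⟩
    · rcases ih hT with hζ | ⟨Vs₂, V₂', T₂', rfl, hlen, hV', hT'⟩
      · exact .inl (.flat (hV₀ hV) hζ)
      · exact .inr ⟨V₂ :: Vs₂, V₂', T₂', rfl, by simpa using hlen, hV', .flat (hV₀ hV) hT'⟩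
    · cases Vs <;> simp [Tm.apps] at e
    · cases Vs with
      | nil =>
        cases e
        exact .inr ⟨[], U₂, _, rfl, by simp, hU, .flat (hV₀ hV) hS⟩
      | cons => simp [Tm.apps] at e

end Cpx

def DegreeDecreasing (h g : Nat → Nat) : Prop := ∀ k d, g k = d + 1 → g (h k) = d

theorem csx_sort (hg : DegreeDecreasing h g) (L : Env) (k : Nat) :
    Csx h g L (.sort k) := by
  generalize e : g k = n
  induction n using Nat.strong_induction_on generalizing k with
  | _ n ih =>
    refine .intro fun T₂ hs hne => ?_
    rcases hs.inv_sort with rfl | ⟨rfl, d, hd⟩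
    · exact absurd rfl hne
    · exact ih d (by omega) (h k) (hg k d hd)

namespace Csx

variable {L : Env}

theorem appl_of_invariant (P : Tm → Prop) (hP : ∀ {T T'}, P T → Cpx h g L T T' → P T')
    (hPb : ∀ {b W U}, ¬ P (.bind b W U)) {V : Tm} (hV : Csx h g L V) {T : Tm}
    (hT : Csx h g L T) (hPT : P T) : Csx h g L (.flat .appl V T) := by
  induction hV generalizing T with
  | @intro V fV ihV =>
    induction hT with
    | @intro T fT ihT =>
      refine .intro fun Z hs hne => ?_
      rcases hs.inv_appl with ⟨V₂, T₂, rfl, hV₂, hT₂⟩ | ⟨_, _, _, _, _, rfl, -⟩ |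
        ⟨_, _, _, _, _, rfl, -⟩
      · by_cases hv : V = V₂
        · subst hv
          exact ihT T₂ hT₂ (by rintro rfl; exact hne rfl) (hP hPT hT₂)
        · exact ihV V₂ hV₂ hv ((Csx.intro fT).of_cpx hT₂) (hP hPT hT₂)
      all_goals exact absurd hPT hPb

theorem apps_sort (hg : DegreeDecreasing h g) {Vs : List Tm} (k : Nat)
    (hVs : ∀ V ∈ Vs, Csx h g L V) : Csx h g L (apps Vs (.sort k)) := by
  induction Vs with
  | nil => exact csx_sort hg L k
  | cons V Vs ih =>
    refine appl_of_invariant (fun X => ∃ Vs k, X = apps Vs (.sort k)) ?_ ?_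
      (hVs V (by simp)) (ih fun V hV => hVs V (by simp [hV])) ⟨Vs, k, rfl⟩
    · rintro _ _ ⟨Vs, k, rfl⟩ hc
      obtain ⟨Vs₂, S₂, rfl, -, hS₂⟩ := hc.inv_apps (by simp)
      rcases hS₂.inv_sort with rfl | ⟨rfl, -⟩
      exacts [⟨Vs₂, k, rfl⟩, ⟨Vs₂, h k, rfl⟩]
    · rintro _ _ _ ⟨Vs, k, e⟩
      cases Vs <;> simp [apps] at e

theorem apps_lref {K : Env} {b : Bk} {W : Tm} {i : Nat} (hi : Drop 0 i L (.pair K b W))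
    {Vs : List Tm} (hc : Csx h g L (apps Vs (W.lift 0 (i + 1)))) :
    Csx h g L (apps Vs (.lref i)) := by
  generalize e : apps Vs (W.lift 0 (i + 1)) = X at hc
  induction hc generalizing Vs with
  | @intro X fX ihX =>
    subst e
    refine .intro fun Z hs hne => ?_
    obtain ⟨Vs₂, S₂, rfl, hf, hS₂⟩ := hs.inv_apps (by simp)
    rcases hS₂.inv_lref with rfl | ⟨K', b', W₁, W₂, hi', hW, rfl⟩
    · refine ihX _ (Cpx.apps hf (.refl _ _)) (fun e => hne ?_) rfl
      rw [(apps_inj hf.length_eq e).1]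
    · cases hi.unique hi'
      exact (Csx.intro fX).of_cpx (Cpx.apps hf (hW.lift hi.succ))

theorem apps_cast {Vs : List Tm} {U T : Tm} (hU : Csx h g L (apps Vs U))
    (hT : Csx h g L (apps Vs T)) : Csx h g L (apps Vs (.flat .cast U T)) := by
  generalize eU : apps Vs U = X at hU
  generalize eT : apps Vs T = Y at hT
  induction hU generalizing Y Vs U T with
  | @intro X fX ihX =>
    induction hT generalizing Vs U T with
    | @intro Y fY ihY =>
      subst eU eT
      refine .intro fun Z hs hne => ?_
      obtain ⟨Vs₂, S₂, rfl, hf, hS₂⟩ := hs.inv_apps (by simp)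
      have hlen := hf.length_eq
      rcases hS₂.inv_cast with ⟨U₂, T₂, rfl, hU₂, hT₂⟩ | hT₂ | hU₂
      · by_cases hx : apps Vs U = apps Vs₂ U₂
        · obtain ⟨rfl, rfl⟩ := apps_inj hlen hx
          refine ihY _ (Cpx.apps hf hT₂) (fun e => hne ?_) rfl rfl
          rw [(apps_inj hlen e).2]
        · exact ihX _ (Cpx.apps hf hU₂) hx rfl _ rfl ((Csx.intro fY).of_cpx (Cpx.apps hf hT₂))
      · exact (Csx.intro fY).of_cpx (Cpx.apps hf hT₂)
      · exact (Csx.intro fX).of_cpx (Cpx.apps hf hU₂)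

theorem apps_beta {Vs : List Tm} {V W T : Tm}
    (hc : Csx h g L (apps Vs (.bind .abbr (.flat .cast W V) T))) :
    Csx h g L (apps Vs (.flat .appl V (.bind .abst W T))) := by
  generalize e : apps Vs (.bind .abbr (.flat .cast W V) T) = X at hc
  induction hc generalizing Vs V W T with
  | @intro X fX ihX =>
    subst e
    refine .intro fun Z hs hne => ?_
    obtain ⟨Vs₂, S₂, rfl, hf, hS₂⟩ := hs.inv_apps (by simp)
    rcases hS₂.inv_appl with ⟨V₂, X', rfl, hV₂, hX'⟩ |
      ⟨_, _, V₂, W₂, T₂, e, hV₂, hW₂, hT₂, rfl⟩ | ⟨_, _, _, _, _, e, -⟩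
    · obtain ⟨W₂, T₂, rfl, hW₂, hT₂⟩ := hX'.inv_abst
      refine ihX _ (Cpx.apps hf (.bind (.flat hW₂ hV₂) hT₂.abbr_cast_of_abst))
        (fun e => hne ?_) rfl
      obtain ⟨rfl, he⟩ := apps_inj hf.length_eq e
      cases he
      rfl
    · cases e
      exact (Csx.intro fX).of_cpx (Cpx.apps hf (.bind (.flat hW₂ hV₂) hT₂.abbr_cast_of_abst))
    · cases e

theorem apps_abbr {V : Tm} (hV : Csx h g L V) {Vs : List Tm} {T : Tm}
    (hT : Csx h g (.pair L .abbr V) (apps (Vs.map (Tm.lift 0 1)) T)) :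
    Csx h g L (apps Vs (.bind .abbr V T)) := by
  generalize e : apps (Vs.map (Tm.lift 0 1)) T = X at hT
  -- θ moves an argument under the binder without changing the body: the spine length is the
  -- third, innermost measure
  obtain ⟨n, hn⟩ : ∃ n, Vs.length ≤ n := ⟨_, le_rfl⟩
  induction hV generalizing X n Vs T with
  | @intro V _ ihV =>
    induction hT generalizing n Vs T with
    | @intro X fX ihX =>
      induction n using Nat.strong_induction_on generalizing Vs T with
      | _ n ihn =>
        subst e
        refine .intro fun Z hs hne => ?_
        rcases hs.inv_apps_abbr with hζ | ⟨Vs₂, V₂, T₂, rfl, hlen, hV₂, hX₂⟩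
        · exact ((Csx.intro fX).of_cpx hζ).of_lift (.one _ _ _)
        by_cases hv : V = V₂
        · subst hv
          by_cases hx : apps (Vs.map (Tm.lift 0 1)) T = apps (Vs₂.map (Tm.lift 0 1)) T₂
          · rcases hlen.lt_or_eq with hlt | heq
            · exact ihn _ (by omega) hx.symm le_rfl
            · obtain ⟨hVs, rfl⟩ := apps_inj (by simpa using heq.symm) hx
              rw [List.map_injective_iff.2 (lift_injective 0 1) hVs] at hne
              exact absurd rfl hne
          · exact ihX _ hX₂ hx rfl _ le_rfl
        · exact ihV V₂ hV₂ hv _ rfl (((Csx.intro fX).of_cpx hX₂).of_lpx (.pair (.refl L) hV₂)) _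
            le_rfl

end Csx

def LiftStep (p q : Env × Tm) : Prop :=
  ∃ d l, Drop d l q.1 p.1 ∧ q.2 = p.2.lift d l

abbrev Lifts : Env × Tm → Env × Tm → Prop := Relation.ReflTransGen LiftStep

theorem LiftStep.of_drop {L₀ L : Env} {d l : Nat} (hd : Drop d l L₀ L) (T : Tm) :
    LiftStep (L, T) (L₀, T.lift d l) :=
  ⟨d, l, hd, rfl⟩

theorem Csx.of_lifts {L : Env} {T : Tm} (hc : Csx h g L T) {q : Env × Tm}
    (hq : Lifts (L, T) q) : Csx h g q.1 q.2 := by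
  induction hq with
  | refl => exact hc
  | tail _ hs ih => obtain ⟨d, l, hd, e⟩ := hs; exact e ▸ ih.lift hd

namespace Lifts

variable {L : Env} {q : Env × Tm}

theorem sort {k : Nat} (hq : Lifts (L, .sort k) q) : q.2 = .sort k := by
  induction hq with
  | refl => rfl
  | tail _ hs ih => obtain ⟨d, l, -, e⟩ := hs; rw [e, ih]; rfl

theorem bind {b : Bk} {W T : Tm} (hq : Lifts (L, .bind b W T) q) :
    ∃ W₀ T₀, q.2 = .bind b W₀ T₀ ∧ Lifts (L, W) (q.1, W₀) ∧
      Lifts (.pair L b W, T) (.pair q.1 b W₀, T₀) := by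
  induction hq with
  | refl => exact ⟨W, T, rfl, .refl, .refl⟩
  | tail _ hs ih =>
    obtain ⟨W₁, T₁, e₁, hW, hT⟩ := ih
    obtain ⟨d, l, hd, e⟩ := hs
    exact ⟨_, _, by rw [e, e₁]; rfl, hW.tail (.of_drop hd _),
      hT.tail (.of_drop (.skip hd (lift_spec d l W₁)) _)⟩

theorem flat {f : Fk} {V T : Tm} (hq : Lifts (L, .flat f V T) q) :
    ∃ V₀ T₀, q.2 = .flat f V₀ T₀ ∧ Lifts (L, V) (q.1, V₀) ∧ Lifts (L, T) (q.1, T₀) := by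
  induction hq with
  | refl => exact ⟨V, T, rfl, .refl, .refl⟩
  | tail _ hs ih =>
    obtain ⟨V₁, T₁, e₁, hV, hT⟩ := ih
    obtain ⟨d, l, hd, e⟩ := hs
    exact ⟨_, _, by rw [e, e₁]; rfl, hV.tail (.of_drop hd _), hT.tail (.of_drop hd _)⟩

theorem apps_sort {Vs : List Tm} {k : Nat} (hq : Lifts (L, apps Vs (.sort k)) q) :
    ∃ Vs₀, q.2 = apps Vs₀ (.sort k) ∧ ∀ V₀ ∈ Vs₀, ∃ V ∈ Vs, Lifts (L, V) (q.1, V₀) := by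
  induction hq with
  | refl => exact ⟨Vs, rfl, fun V hV => ⟨V, hV, .refl⟩⟩
  | tail _ hs ih =>
    obtain ⟨Vs₁, e₁, hVs⟩ := ih
    obtain ⟨d, l, hd, e⟩ := hs
    refine ⟨Vs₁.map (Tm.lift d l), by rw [e, e₁, lift_apps]; rfl, ?_⟩
    simp only [List.mem_map, forall_exists_index, and_imp, forall_apply_eq_imp_iff₂]
    intro V₁ hV₁
    obtain ⟨V, hV, hq⟩ := hVs V₁ hV₁
    exact ⟨V, hV, hq.tail (.of_drop hd _)⟩

theorem apps_beta {Vs : List Tm} {V W T : Tm}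
    (hq : Lifts (L, apps Vs (.flat .appl V (.bind .abst W T))) q) :
    ∃ Vs₀ V₀ W₀ T₀, q.2 = apps Vs₀ (.flat .appl V₀ (.bind .abst W₀ T₀)) ∧
      Lifts (L, apps Vs (.bind .abbr (.flat .cast W V) T))
        (q.1, apps Vs₀ (.bind .abbr (.flat .cast W₀ V₀) T₀)) ∧
      Lifts (L, W) (q.1, W₀) := by
  induction hq with
  | refl => exact ⟨Vs, V, W, T, rfl, .refl, .refl⟩
  | tail _ hs ih =>
    obtain ⟨Vs₁, V₁, W₁, T₁, e₁, hc, hW⟩ := ih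
    obtain ⟨d, l, hd, e⟩ := hs
    refine ⟨_, _, _, _, by rw [e, e₁, lift_apps]; rfl, hc.tail ⟨d, l, hd, ?_⟩,
      hW.tail (.of_drop hd _)⟩
    rw [lift_apps]; rfl

theorem apps_lref {Vs : List Tm} {i : Nat} (hq : Lifts (L, apps Vs (.lref i)) q) {K : Env}
    {b : Bk} {W : Tm} (hi : Drop 0 i L (.pair K b W)) :
    ∃ Vs₀ i₀ K₀ W₀, q.2 = apps Vs₀ (.lref i₀) ∧ Vs₀.length = Vs.length ∧
      Drop 0 i₀ q.1 (.pair K₀ b W₀) ∧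
      Lifts (L, apps Vs (W.lift 0 (i + 1))) (q.1, apps Vs₀ (W₀.lift 0 (i₀ + 1))) ∧
      Lifts (K, W) (K₀, W₀) := by
  induction hq with
  | refl => exact ⟨Vs, i, K, W, rfl, rfl, hi, .refl, .refl⟩
  | tail _ hs ih =>
    obtain ⟨Vs₁, i₁, K₁, W₁, e₁, hlen, hi₁, hc, hW⟩ := ih
    obtain ⟨d, l, hd, e⟩ := hs
    by_cases hid : i₁ < d
    · obtain ⟨K₀, hi₀, hK⟩ := hd.lift_entry_of_lt hi₁ hid
      refine ⟨Vs₁.map (Tm.lift d l), i₁, K₀, _, by rw [e, e₁, lift_apps]; simp [Tm.lift, hid],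
        by simpa using hlen, hi₀, hc.tail ⟨d, l, hd, ?_⟩, hW.tail (.of_drop hK _)⟩
      rw [lift_apps, lift_lift_comm (Nat.zero_le _) W₁, show d - 1 - i₁ + (i₁ + 1) = d by omega]
    · refine ⟨Vs₁.map (Tm.lift d l), i₁ + l, K₁, W₁, by rw [e, e₁, lift_apps]; simp [Tm.lift, hid],
        by simpa using hlen, hd.shift_of_le hi₁ (by omega), hc.tail ⟨d, l, hd, ?_⟩, hW⟩
      rw [lift_apps, lift_lift_of_le_of_le (Nat.zero_le _) (by omega), Nat.add_right_comm]

theorem apps_abbr {Vs : List Tm} {V T : Tm} (hq : Lifts (L, apps Vs (.bind .abbr V T)) q) :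
    ∃ Vs₀ V₀ T₀, q.2 = apps Vs₀ (.bind .abbr V₀ T₀) ∧ Lifts (L, V) (q.1, V₀) ∧
      Lifts (.pair L .abbr V, apps (Vs.map (Tm.lift 0 1)) T)
        (.pair q.1 .abbr V₀, apps (Vs₀.map (Tm.lift 0 1)) T₀) := by
  induction hq with
  | refl => exact ⟨Vs, V, T, rfl, .refl, .refl⟩
  | tail _ hs ih =>
    obtain ⟨Vs₁, V₁, T₁, e₁, hV, hc⟩ := ih
    obtain ⟨d, l, hd, e⟩ := hs
    refine ⟨_, _, _, by rw [e, e₁, lift_apps]; rfl, hV.tail (.of_drop hd _),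
      hc.tail ⟨d + 1, l, .skip hd (lift_spec d l V₁), ?_⟩⟩
    simp only [lift_apps, List.map_map]
    congr 1
    exact List.map_congr_left fun x _ => lift_lift_comm (Nat.zero_le d) x

theorem apps_cast {Vs : List Tm} {U T : Tm} (hq : Lifts (L, apps Vs (.flat .cast U T)) q) :
    ∃ Vs₀ U₀ T₀, q.2 = apps Vs₀ (.flat .cast U₀ T₀) ∧
      Lifts (L, apps Vs U) (q.1, apps Vs₀ U₀) ∧ Lifts (L, apps Vs T) (q.1, apps Vs₀ T₀) := by
  induction hq with
  | refl => exact ⟨Vs, U, T, rfl, .refl, .refl⟩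
  | tail _ hs ih =>
    obtain ⟨Vs₁, U₁, T₁, e₁, hU, hT⟩ := ih
    obtain ⟨d, l, hd, e⟩ := hs
    refine ⟨_, _, _, by rw [e, e₁, lift_apps]; rfl, hU.tail ⟨d, l, hd, ?_⟩,
      hT.tail ⟨d, l, hd, ?_⟩⟩ <;> rw [lift_apps]

end Lifts

namespace Aaa

theorem lift {L : Env} {T : Tm} {A : Aa} (ha : Aaa L T A) {L₀ : Env} {d l : Nat}
    (hd : Drop d l L₀ L) : Aaa L₀ (T.lift d l) A := by
  induction ha generalizing L₀ d l with
  | sort => exact .sort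
  | @lref _ _ _ _ _ i hi hW ih =>
    by_cases hid : i < d
    · obtain ⟨K₀, hi₀, hK⟩ := hd.lift_entry_of_lt hi hid
      simpa [Tm.lift, hid] using Aaa.lref hi₀ (ih hK)
    · simpa [Tm.lift, hid] using Aaa.lref (hd.shift_of_le hi (by omega)) hW
  | abbr _ _ ihV ihT => exact .abbr (ihV hd) (ihT (.skip hd (lift_spec d l _)))
  | abst _ _ ihW ihT => exact .abst (ihW hd) (ihT (.skip hd (lift_spec d l _)))
  | appl _ _ ihV ihT => exact .appl (ihV hd) (ihT hd)
  | cast _ _ ihU ihT => exact .cast (ihU hd) (ihT hd)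

theorem of_lifts {L : Env} {T : Tm} {A : Aa} (ha : Aaa L T A) {q : Env × Tm}
    (hq : Lifts (L, T) q) : Aaa q.1 q.2 A := by
  induction hq with
  | refl => exact ha
  | tail _ hs ih => obtain ⟨d, l, hd, e⟩ := hs; exact e ▸ ih.lift hd

theorem unique {L : Env} {T : Tm} {A₁ A₂ : Aa} (h₁ : Aaa L T A₁) (h₂ : Aaa L T A₂) :
    A₁ = A₂ := by
  induction h₁ generalizing A₂ with
  | sort => cases h₂; rfl
  | lref hi _ ih => cases h₂ with | lref hi' hW' => cases hi.unique hi'; exact ih hW'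
  | abbr _ _ _ ihT => cases h₂ with | abbr _ hT => exact ihT hT
  | abst _ _ ihW ihT => cases h₂ with | abst hW hT => rw [ihW hW, ihT hT]
  | appl _ _ _ ihT => cases h₂ with | appl _ hT => cases ihT hT; rfl
  | cast _ _ ihU _ => cases h₂ with | cast hU _ => exact ihU hU

end Aaa

structure IsCand (h g : Nat → Nat) (P : Env → Tm → Prop) : Prop where
  csx : ∀ {L T}, P L T → Csx h g L T
  lift : ∀ {L T L₀ d l}, Drop d l L₀ L → P L T → P L₀ (T.lift d l)
  sort : ∀ {L Vs} (k : Nat), (∀ V ∈ Vs, Csx h g L V) → P L (apps Vs (.sort k))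
  beta : ∀ {L Vs V W T}, P L (apps Vs (.bind .abbr (.flat .cast W V) T)) → Csx h g L W →
    P L (apps Vs (.flat .appl V (.bind .abst W T)))
  delta : ∀ {L K i b W Vs}, Drop 0 i L (.pair K b W) →
    P L (apps Vs (W.lift 0 (i + 1))) → P L (apps Vs (.lref i))
  abbr : ∀ {L V T Vs}, Csx h g L V → P (.pair L .abbr V) (apps (Vs.map (Tm.lift 0 1)) T) →
    P L (apps Vs (.bind .abbr V T))
  cast : ∀ {L Vs U T}, P L (apps Vs U) → P L (apps Vs T) → P L (apps Vs (.flat .cast U T))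

theorem isCand_csx (hg : DegreeDecreasing h g) : IsCand h g (Csx h g) where
  csx hc := hc
  lift hd hc := hc.lift hd
  sort k hVs := Csx.apps_sort hg k hVs
  beta hc _ := Csx.apps_beta hc
  delta hi hc := Csx.apps_lref hi hc
  abbr hV hc := Csx.apps_abbr hV hc
  cast hU hT := Csx.apps_cast hU hT

def Arrow (P Q : Env → Tm → Prop) (L : Env) (T : Tm) : Prop :=
  ∀ (q : Env × Tm) (V : Tm), Lifts (L, T) q → P q.1 V → Q q.1 (.flat .appl V q.2)

namespace Arrow

variable {P Q : Env → Tm → Prop}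

theorem csx (hP : IsCand h g P) (hQ : IsCand h g Q) {L : Env} {T : Tm} (hT : Arrow P Q L T) :
    Csx h g L T := by
  -- a fresh variable declared with a sort lies in `P`, by δ-expansion of that sort
  have hx : P (.pair L .abst (.sort 0)) (.lref 0) :=
    hP.delta (Vs := []) (.refl _) (hP.sort (Vs := []) 0 (by simp))
  have happ := hQ.csx (hT _ _ (.single (.of_drop (.one L .abst (.sort 0)) T)) hx)
  exact happ.of_flat_right.of_lift (.one L .abst (.sort 0))

theorem lift {L T L₀ d l} (hd : Drop d l L₀ L) (hT : Arrow P Q L T) :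
    Arrow P Q L₀ (T.lift d l) :=
  fun q V hq hV => hT q V (.head (.of_drop hd T) hq) hV

theorem sort (hP : IsCand h g P) (hQ : IsCand h g Q) {L : Env} {Vs : List Tm} (k : Nat)
    (hVs : ∀ V ∈ Vs, Csx h g L V) : Arrow P Q L (apps Vs (.sort k)) := by
  intro q V₀ hq hV₀
  obtain ⟨Vs₀, e, hVs₀⟩ := hq.apps_sort
  rw [e]
  refine hQ.sort (Vs := V₀ :: Vs₀) k fun V hV => ?_
  rcases List.mem_cons.1 hV with rfl | hV
  · exact hP.csx hV₀
  · obtain ⟨V', hV', hq'⟩ := hVs₀ V hV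
    exact (hVs V' hV').of_lifts hq'

theorem beta (hQ : IsCand h g Q) {L : Env} {Vs : List Tm} {V W T : Tm}
    (hc : Arrow P Q L (apps Vs (.bind .abbr (.flat .cast W V) T))) (hW : Csx h g L W) :
    Arrow P Q L (apps Vs (.flat .appl V (.bind .abst W T))) := by
  intro q V₀ hq hV₀
  obtain ⟨Vs₀, V', W', T', e, hc', hW'⟩ := hq.apps_beta
  rw [e]
  exact hQ.beta (Vs := V₀ :: Vs₀) (hc _ V₀ hc' hV₀) (hW.of_lifts hW')

theorem delta (hQ : IsCand h g Q) {L K : Env} {i : Nat} {b : Bk} {W : Tm} {Vs : List Tm}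
    (hi : Drop 0 i L (.pair K b W)) (hc : Arrow P Q L (apps Vs (W.lift 0 (i + 1)))) :
    Arrow P Q L (apps Vs (.lref i)) := by
  intro q V₀ hq hV₀
  obtain ⟨Vs₀, i₀, K₀, W₀, e, -, hi₀, hc', -⟩ := hq.apps_lref hi
  rw [e]
  exact hQ.delta (Vs := V₀ :: Vs₀) hi₀ (hc _ V₀ hc' hV₀)

theorem abbr (hP : IsCand h g P) (hQ : IsCand h g Q) {L : Env} {V T : Tm} {Vs : List Tm}
    (hV : Csx h g L V) (hc : Arrow P Q (.pair L .abbr V) (apps (Vs.map (Tm.lift 0 1)) T)) :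
    Arrow P Q L (apps Vs (.bind .abbr V T)) := by
  intro q V₀ hq hV₀
  obtain ⟨Vs₀, V', T', e, hV', hc'⟩ := hq.apps_abbr
  rw [e]
  exact hQ.abbr (Vs := V₀ :: Vs₀) (hV.of_lifts hV')
    (hc _ (V₀.lift 0 1) hc' (hP.lift (.one q.1 .abbr V') hV₀))

theorem cast (hQ : IsCand h g Q) {L : Env} {Vs : List Tm} {U T : Tm}
    (hU : Arrow P Q L (apps Vs U)) (hT : Arrow P Q L (apps Vs T)) :
    Arrow P Q L (apps Vs (.flat .cast U T)) := by
  intro q V₀ hq hV₀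
  obtain ⟨Vs₀, U₀, T₀, e, hU', hT'⟩ := hq.apps_cast
  rw [e]
  exact hQ.cast (Vs := V₀ :: Vs₀) (hU _ V₀ hU' hV₀) (hT _ V₀ hT' hV₀)

end Arrow

theorem IsCand.arrow {P Q : Env → Tm → Prop} (hP : IsCand h g P) (hQ : IsCand h g Q) :
    IsCand h g (Arrow P Q) where
  csx := Arrow.csx hP hQ
  lift := Arrow.lift
  sort := Arrow.sort hP hQ
  beta := Arrow.beta hQ
  delta := Arrow.delta hQ
  abbr := Arrow.abbr hP hQ
  cast := Arrow.cast hQ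

def Interp (h g : Nat → Nat) : Aa → Env → Tm → Prop
  | .star => Csx h g
  | .impl B A => Arrow (Interp h g B) (Interp h g A)

theorem isCand_interp (hg : DegreeDecreasing h g) :
    ∀ A : Aa, IsCand h g (Interp h g A)
  | .star => isCand_csx hg
  | .impl B A => (isCand_interp hg B).arrow (isCand_interp hg A)

namespace Refines

variable {P : Env → Env → Tm → Tm → Prop}

theorem lift
    (hP : ∀ {L₁ L₂ W V L₁' L₂' d l}, P L₁ L₂ W V → Drop d l L₁' L₁ → Drop d l L₂' L₂ →
      P L₁' L₂' (W.lift d l) (V.lift d l))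
    {d l : Nat} {L₁ L : Env} (hd : Drop d l L₁ L) {L₂ : Env} (hr : Refines P L L₂) :
    ∃ M, Drop d l M L₂ ∧ Refines P L₁ M := by
  induction hd generalizing L₂ with
  | atom l => cases hr; exact ⟨.null, .atom l, .null⟩
  | pair h₀ => cases Drop.eq_of_zero h₀; exact ⟨L₂, .refl L₂, hr⟩
  | drop _ ih => obtain ⟨M, h₁, h₂⟩ := ih hr; exact ⟨.pair M _ _, .drop h₁, .pair h₂⟩
  | skip h₀ hl ih =>
    cases hr with
    | pair hr => obtain ⟨M, h₁, h₂⟩ := ih hr; exact ⟨_, .skip h₁ hl, .pair h₂⟩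
    | beta hr hPr =>
      obtain ⟨M, h₁, h₂⟩ := ih hr
      rw [hl.eq_lift]
      exact ⟨_, .skip h₁ (lift_spec _ _ _), .beta h₂ (hP hPr h₀ h₁)⟩

theorem lifts
    (hP : ∀ {L₁ L₂ W V L₁' L₂' d l}, P L₁ L₂ W V → Drop d l L₁' L₁ → Drop d l L₂' L₂ →
      P L₁' L₂' (W.lift d l) (V.lift d l))
    {L L₂ : Env} (hr : Refines P L L₂) {X : Tm} {q : Env × Tm}
    (hq : Lifts (L, X) q) : ∃ M, Lifts (L₂, X) (M, q.2) ∧ Refines P q.1 M := by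
  induction hq with
  | refl => exact ⟨L₂, .refl, hr⟩
  | tail _ hs ih =>
    obtain ⟨M, hM, hrM⟩ := ih
    obtain ⟨d, l, hd, e⟩ := hs
    obtain ⟨M₁, h₁, h₂⟩ := lift hP hd hrM
    exact ⟨M₁, hM.tail ⟨d, l, h₁, e⟩, h₂⟩

end Refines

/-- The environments in which the bodies of β-redexes are interpreted. -/
abbrev SemRefines (h g : Nat → Nat) : Env → Env → Prop :=
  Refines fun L₁ L₂ W V => ∃ B, Aaa L₂ W B ∧ Interp h g B L₁ (.flat .cast W V)

theorem SemRefines.lifts (hg : DegreeDecreasing h g) {L L₂ : Env} (hr : SemRefines h g L L₂)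
    {X : Tm} {q : Env × Tm} (hq : Lifts (L, X) q) :
    ∃ M, Lifts (L₂, X) (M, q.2) ∧ SemRefines h g q.1 M :=
  Refines.lifts (fun ⟨B, hW, hI⟩ h₁ h₂ => ⟨B, hW.lift h₂, (isCand_interp hg B).lift h₁ hI⟩) hr hq

def Valid (h g : Nat → Nat) (A : Aa) (L : Env) (T : Tm) : Prop :=
  ∀ q : Env × Tm, Lifts (L, T) q → ∀ L', SemRefines h g L' q.1 → Interp h g A L' q.2

namespace Valid

theorem csx (hg : DegreeDecreasing h g) {A : Aa} {L : Env} {T : Tm} (hv : Valid h g A L T) :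
    Csx h g L T :=
  (isCand_interp hg A).csx (hv _ .refl L (.refl L))

theorem sort (hg : DegreeDecreasing h g) {L : Env} {k : Nat} : Valid h g .star L (.sort k) := by
  intro q hq L' _
  rw [hq.sort]
  exact csx_sort hg L' k

theorem lref (hg : DegreeDecreasing h g) {L K : Env} {b : Bk} {W : Tm} {B : Aa} {i : Nat}
    (hi : Drop 0 i L (.pair K b W)) (hW : Aaa K W B) (hvW : Valid h g B K W) :
    Valid h g B L (.lref i) := by
  intro q hq L' hr
  have hB := isCand_interp hg B
  obtain ⟨_ | _, i₀, K₀, W₀, e, hlen, hi₀, -, hW₀⟩ := Lifts.apps_lref (Vs := []) hq hi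
  · rw [e]
    rcases hr.entry hi₀ with ⟨K', hi', hK'⟩ | ⟨rfl, K', V, hi', -, B', hB', hI⟩
    · exact hB.delta (Vs := []) hi' (hB.lift hi'.succ (hvW _ hW₀ K' hK'))
    · cases (hW.of_lifts hW₀).unique hB'
      exact hB.delta (Vs := []) hi' (hB.lift hi'.succ hI)
  · cases hlen

theorem abbr (hg : DegreeDecreasing h g) {L : Env} {V T : Tm} {A B : Aa} (hvV : Valid h g B L V)
    (hvT : Valid h g A (.pair L .abbr V) T) : Valid h g A L (.bind .abbr V T) := by
  intro q hq L' hr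
  obtain ⟨V₀, T₀, e, hV, hT⟩ := hq.bind
  rw [e]
  exact (isCand_interp hg A).abbr (Vs := []) ((isCand_interp hg B).csx (hvV _ hV L' hr))
    (hvT _ hT _ (.pair hr))

/-- The body of an abstraction applied to `V` is interpreted in the environment where the
abstraction entry `W` is refined to the abbreviation `.flat .cast W V`, as left by β. -/
theorem abst (hg : DegreeDecreasing h g) {L : Env} {W T : Tm} {A B : Aa} (hW : Aaa L W B)
    (hvW : Valid h g B L W) (hvT : Valid h g A (.pair L .abst W) T) :
    Valid h g (.impl B A) L (.bind .abst W T) := by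
  intro q hq L' hr q' V hq' hV
  have hA := isCand_interp hg A
  have hB := isCand_interp hg B
  obtain ⟨W₀, T₀, e, hW₀, hT₀⟩ := hq.bind
  rw [e] at hq'
  obtain ⟨M, hM, hrM⟩ := hr.lifts hg hq'
  obtain ⟨W₁, T₁, e₁, hW₁, hT₁⟩ := hM.bind
  rw [e₁]
  have hWi : Interp h g B q'.1 W₁ := hvW _ (hW₀.trans hW₁) _ hrM
  have hcast : Interp h g B q'.1 (.flat .cast W₁ V) := hB.cast (Vs := []) hWi hV
  have hTi := hvT _ (hT₀.trans hT₁) _ (.beta hrM ⟨B, hW.of_lifts (hW₀.trans hW₁), hcast⟩)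
  exact hA.beta (Vs := []) (hA.abbr (Vs := []) (hB.csx hcast) hTi) (hB.csx hWi)

theorem appl {L : Env} {V T : Tm} {A B : Aa} (hvV : Valid h g B L V)
    (hvT : Valid h g (.impl B A) L T) : Valid h g A L (.flat .appl V T) := by
  intro q hq L' hr
  obtain ⟨V₀, T₀, e, hV, hT⟩ := hq.flat
  rw [e]
  exact hvT _ hT L' hr (L', T₀) V₀ .refl (hvV _ hV L' hr)

theorem cast (hg : DegreeDecreasing h g) {L : Env} {U T : Tm} {A : Aa}
    (hvU : Valid h g A L U) (hvT : Valid h g A L T) : Valid h g A L (.flat .cast U T) := by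
  intro q hq L' hr
  obtain ⟨U₀, T₀, e, hU, hT⟩ := hq.flat
  rw [e]
  exact (isCand_interp hg A).cast (Vs := []) (hvU _ hU L' hr) (hvT _ hT L' hr)

end Valid

theorem Aaa.valid (hg : DegreeDecreasing h g) {L : Env} {T : Tm} {A : Aa}
    (ha : Aaa L T A) : Valid h g A L T := by
  induction ha with
  | sort => exact .sort hg
  | lref hi hW ihW => exact .lref hg hi hW ihW
  | abbr _ _ ihV ihT => exact .abbr hg ihV ihT
  | abst hW _ ihW ihT => exact .abst hg hW ihW ihT
  | appl _ _ ihV ihT => exact .appl ihV ihT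
  | cast _ _ ihU ihT => exact .cast hg ihU ihT

theorem aaa_csx_general {h g : Nat → Nat}
    (hg : ∀ k d, g k = d + 1 → g (h k) = d)
    {L : Env} {T : Tm} {A : Aa} (ha : Aaa L T A) : Csx h g L T :=
  (ha.valid hg).csx hg

theorem aaa_csx {h g : Nat → Nat}
    (hh : ∀ k, k < h k) (hg : ∀ k d, g k = d + 1 → g (h k) = d)
    {L : Env} {T : Tm} {A : Aa} (ha : Aaa L T A) : Csx h g L T :=
  aaa_csx_general hg ha
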